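/- In the Heisenberg group, the word e₂^{-t} e₁^{x} e₂^{y+t} (with e₁^s = (s,0,0), e₂^s = (0,s,0), real exponents) has endpoint (x, y, x t + x y/2) and the sum of absolute exponents is x + y + 2t when x, y, t ≥ 0. Consequently, for integers x, y, t ≥ 0 and n = x + y + 2t, the point (x, y, xt + xy/2) ∈ H(ℤ) has word length at most n in the standard generators. -/

import Mathlib

/-- Heisenberg multiplication in exponential coordinates. -/
noncomputable def Hmul (a b : ℝ × ℝ × ℝ) : ℝ × ℝ × ℝ :=
  (a.1 + b.1, a.2.1 + b.2.1, a.2.2 + b.2.2 + (a.1 * b.2.1 - a.2.1 * b.1) / 2)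

/-- One-parameter subgroup through e₁: e₁^s = (s,0,0). -/
noncomputable def e1pow (s : ℝ) : ℝ × ℝ × ℝ := (s, 0, 0)

/-- One-parameter subgroup through e₂: e₂^s = (0,s,0). -/
noncomputable def e2pow (s : ℝ) : ℝ × ℝ × ℝ := (0, s, 0)

/-- The standard (symmetric) generating set of H(ℤ). -/
def stdGen : Set (ℝ × ℝ × ℝ) :=
  {(1, 0, 0), (-1, 0, 0), (0, 1, 0), (0, -1, 0)}

/-- Word length with respect to the standard generators. -/
noncomputable def wordLength (p : ℝ × ℝ × ℝ) : ℕ :=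
  sInf {n | ∃ l : List (ℝ × ℝ × ℝ),
    l.length = n ∧ (∀ a ∈ l, a ∈ stdGen) ∧ l.foldl Hmul (0, 0, 0) = p}

/-! Both e₁^s and e₂^s are one-parameter subgroups, so a block of n letters e₁^{±1} (or e₂^{±1})
multiplies out to a single power e₁^{±n} (or e₂^{±n}). The word of x + y + 2t standard generators
e₂^{-1}…e₂^{-1} e₁…e₁ e₂…e₂ therefore evaluates to e₂^{-t} e₁^{x} e₂^{y+t}, whose endpoint is
computed directly from the multiplication law. -/

theorem Hmul_assoc (a b c : ℝ × ℝ × ℝ) : Hmul (Hmul a b) c = Hmul a (Hmul b c) := by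
  simp only [Hmul, Prod.mk.injEq]
  exact ⟨by ring, by ring, by ring⟩

theorem zero_Hmul (p : ℝ × ℝ × ℝ) : Hmul (0, 0, 0) p = p := by
  simp [Hmul]

theorem Hmul_zero (p : ℝ × ℝ × ℝ) : Hmul p (0, 0, 0) = p := by
  simp [Hmul]

theorem e1pow_add (a b : ℝ) : e1pow (a + b) = Hmul (e1pow a) (e1pow b) := by
  simp [e1pow, Hmul]

theorem e2pow_add (a b : ℝ) : e2pow (a + b) = Hmul (e2pow a) (e2pow b) := by
  simp [e2pow, Hmul]

theorem foldl_Hmul_replicate {f : ℝ → ℝ × ℝ × ℝ} (hf_zero : f 0 = (0, 0, 0))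
    (hf_add : ∀ a b, f (a + b) = Hmul (f a) (f b)) (n : ℕ) (c : ℝ) (p : ℝ × ℝ × ℝ) :
    (List.replicate n (f c)).foldl Hmul p = Hmul p (f (n * c)) := by
  induction n generalizing p with
  | zero => simp [hf_zero, Hmul_zero]
  | succ n ih =>
    rw [List.replicate_succ, List.foldl_cons, ih, Hmul_assoc, ← hf_add, Nat.cast_succ, add_one_mul,
      add_comm]

theorem foldl_Hmul_replicate_e1pow (n : ℕ) (c : ℝ) (p : ℝ × ℝ × ℝ) :
    (List.replicate n (e1pow c)).foldl Hmul p = Hmul p (e1pow (n * c)) :=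
  foldl_Hmul_replicate (by simp [e1pow]) e1pow_add n c p

theorem foldl_Hmul_replicate_e2pow (n : ℕ) (c : ℝ) (p : ℝ × ℝ × ℝ) :
    (List.replicate n (e2pow c)).foldl Hmul p = Hmul p (e2pow (n * c)) :=
  foldl_Hmul_replicate (by simp [e2pow]) e2pow_add n c p

theorem Hmul_e2pow_e1pow_e2pow (x y t : ℝ) :
    Hmul (Hmul (e2pow (-t)) (e1pow x)) (e2pow (y + t)) = (x, y, x * t + x * y / 2) := by
  simp only [Hmul, e1pow, e2pow, Prod.mk.injEq]
  exact ⟨by ring, by ring, by ring⟩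

theorem wordLength_le_of_foldl {l : List (ℝ × ℝ × ℝ)} (hl : ∀ a ∈ l, a ∈ stdGen) :
    wordLength (l.foldl Hmul (0, 0, 0)) ≤ l.length :=
  Nat.sInf_le ⟨l, rfl, hl, rfl⟩

theorem wordLength_three_sided_le (x y t : ℕ) :
    wordLength ((x : ℝ), (y : ℝ), (x : ℝ) * (t : ℝ) + (x : ℝ) * (y : ℝ) / 2) ≤ x + y + 2 * t := by
  let word := List.replicate t (e2pow (-1)) ++ List.replicate x (e1pow 1)
    ++ List.replicate (y + t) (e2pow 1)
  have h_gen : ∀ a ∈ word, a ∈ stdGen := by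
    intro a ha
    simp only [word, List.mem_append, List.mem_replicate] at ha
    rcases ha with (⟨_, rfl⟩ | ⟨_, rfl⟩) | ⟨_, rfl⟩ <;> simp [stdGen, e1pow, e2pow]
  have h_eval : word.foldl Hmul (0, 0, 0) = ((x : ℝ), (y : ℝ), (x : ℝ) * t + (x : ℝ) * y / 2) := by
    simp only [word, List.foldl_append, foldl_Hmul_replicate_e1pow, foldl_Hmul_replicate_e2pow,
      zero_Hmul, mul_one, mul_neg_one, Nat.cast_add]
    exact Hmul_e2pow_e1pow_e2pow x y t
  have h_length : word.length = x + y + 2 * t := by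
    simp only [word, List.length_append, List.length_replicate]; ring
  simpa only [h_eval, h_length] using wordLength_le_of_foldl h_gen

/-- The word e₂^{-t} e₁^{x} e₂^{y+t} ends at (x, y, xt + xy/2), with total
    absolute exponent x + y + 2t when x, y, t ≥ 0; hence for natural numbers
    x, y, t, the point (x, y, xt + xy/2) has word length at most x + y + 2t. -/
theorem three_sided_word_endpoint_and_length :
    (∀ x y t : ℝ,
      Hmul (Hmul (e2pow (-t)) (e1pow x)) (e2pow (y + t))
        = (x, y, x * t + x * y / 2)) ∧
    (∀ x y t : ℕ,
      wordLength ((x : ℝ), (y : ℝ), (x : ℝ) * (t : ℝ) + (x : ℝ) * (y : ℝ) / 2)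
        ≤ x + y + 2 * t) :=
  ⟨Hmul_e2pow_e1pow_e2pow, wordLength_three_sided_le⟩
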